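/- In the linear example with dynamics dX^{0,N}_t = (a X^N_t − ½b² Ȳ^{0,N}_t)dt + D₀dW⁰_t and dX^N_t = cX^{0,N}_t dt + (D/N)d(∑_{i=1}^N W^i_t), compared with the limiting system dX⁰_t = (aX̄_t − ½b²P̄⁰_t)dt + D₀dW⁰_t, dX̄_t = cX⁰_t dt driven by the same W⁰ and with the same feedback matrices, for all t ∈ [0,T]: |X^{0,N}_t − X⁰_t| + |X^N_t − X̄_t| ≤ e^{Kt}·(D/N)·max_{0≤s≤t}|∑_{i=1}^N W^i_s| almost surely, where K depends on the coefficients; consequently X^{0,N}_t → X⁰_t and X^N_t → X̄_t almost surely as N → ∞. -/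

import Mathlib

/-! The difference between the `N`-player system and the limiting one solves a linear integral
equation whose only forcing term is `(D/N) ∑_{i ≤ N} Wⁱ`, so Gronwall's inequality bounds it
pathwise by that forcing term, which gives the first claim. For the convergence at a fixed time
`t`, Gronwall bounds the difference by `(D/N)` times `|S_N(t)| + ∫₀ᵗ |S_N|`, with
`S_N = ∑_{i ≤ N} Wⁱ`. Since the `Wⁱ_s` are pairwise independent and centred with variance `s`,
this quantity has second moment `O(N)`; the second-moment proof of the strong law of large
numbers (Borel–Cantelli along the squares `N = k²`, then control of the blocks between
consecutive squares) shows that it is `o(N)` almost surely. -/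

open MeasureTheory ProbabilityTheory Filter
open scoped ENNReal NNReal Topology

noncomputable section

/-- Squared 2-Wasserstein distance between two measures, defined via couplings with
quadratic cost. -/
def w2sq {E : Type*} [MeasurableSpace E] [Dist E] (μ ν : Measure E) : ℝ :=
  sInf { r : ℝ | ∃ π : Measure (E × E), IsProbabilityMeasure π ∧
    π.map Prod.fst = μ ∧ π.map Prod.snd = ν ∧ r = ∫ p, dist p.1 p.2 ^ 2 ∂π }

/-- 2-Wasserstein distance. -/
def W2 {E : Type*} [MeasurableSpace E] [Dist E] (μ ν : Measure E) : ℝ :=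
  Real.sqrt (w2sq μ ν)

/-- `κ` is a regular conditional distribution of the random variable `X` given the
sub-σ-field `G` under `P`. -/
def IsCondDistrib {Ω E : Type*} {mΩ : MeasurableSpace Ω} [MeasurableSpace E]
    (X : Ω → E) (P : Measure Ω) (G : MeasurableSpace Ω) (κ : Ω → Measure E) : Prop :=
  (∀ ω, IsProbabilityMeasure (κ ω)) ∧
  (∀ s : Set E, MeasurableSet s → Measurable[G] (fun ω => (κ ω s).toReal)) ∧
  (∀ s : Set E, MeasurableSet s →
    (fun ω => (κ ω s).toReal) =ᵐ[P] P[(X ⁻¹' s).indicator (fun _ => (1:ℝ)) | G])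

/-- `B` is a standard real Brownian motion with respect to the filtration `F` under `P`:
adapted, `B 0 = 0`, continuous paths, Gaussian increments, increments independent
of the past. -/
def IsBM {Ω : Type*} {mΩ : MeasurableSpace Ω} (P : Measure Ω) (F : ℝ → MeasurableSpace Ω)
    (B : ℝ → Ω → ℝ) : Prop :=
  (∀ t, Measurable[F t] (B t)) ∧ (∀ ω, B 0 ω = 0) ∧
  (∀ ω, Continuous fun t => B t ω) ∧
  (∀ s t : ℝ, 0 ≤ s → s ≤ t →
    P.map (fun ω => B t ω - B s ω) = gaussianReal 0 ((t - s).toNNReal)) ∧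
  (∀ s t : ℝ, 0 ≤ s → s ≤ t →
    Indep (MeasurableSpace.comap (fun ω => B t ω - B s ω) inferInstance) (F s) P)

/-- `B` is an `m`-dimensional Brownian motion with respect to the filtration `F` under `P`. -/
def IsBMd {Ω : Type*} {m : ℕ} {mΩ : MeasurableSpace Ω} (P : Measure Ω)
    (F : ℝ → MeasurableSpace Ω) (B : ℝ → Ω → Fin m → ℝ) : Prop :=
  (∀ t, Measurable[F t] (B t)) ∧ (∀ ω, B 0 ω = 0) ∧
  (∀ ω i, Continuous fun t => B t ω i) ∧
  (∀ s t : ℝ, 0 ≤ s → s ≤ t →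
    P.map (fun ω => B t ω - B s ω) =
      Measure.pi (fun _ : Fin m => gaussianReal 0 ((t - s).toNNReal))) ∧
  (∀ s t : ℝ, 0 ≤ s → s ≤ t →
    Indep (MeasurableSpace.comap (fun ω => B t ω - B s ω) inferInstance) (F s) P)

/-- Squared Euclidean norm of a vector. -/
def vsq {n : ℕ} (v : Fin n → ℝ) : ℝ := ∑ i, (v i) ^ 2

/-- Squared Frobenius norm of a matrix. -/
def msq {n m : ℕ} (A : Matrix (Fin n) (Fin m) ℝ) : ℝ := ∑ i, ∑ j, (A i j) ^ 2

/-- Elementary stochastic integral of a simple matrix-valued process against `B`. -/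
def simpleInt {Ω : Type*} {n m : ℕ} (B : ℝ → Ω → Fin m → ℝ) (N : ℕ) (τ : ℕ → ℝ)
    (ξ : ℕ → Ω → Matrix (Fin n) (Fin m) ℝ) (ω : Ω) : Fin n → ℝ :=
  ∑ i ∈ Finset.range N, (ξ i ω).mulVec (B (τ (i + 1)) ω - B (τ i) ω)

/-- `I` is the Itô stochastic integral `∫₀ᵀ H dB`: it is the `L²(P)` limit of elementary
integrals of adapted simple processes approximating `H` in `L²(dt ⊗ dP)`. -/
def IsItoInt {Ω : Type*} {n m : ℕ} {mΩ : MeasurableSpace Ω} (P : Measure Ω)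
    (F : ℝ → MeasurableSpace Ω) (B : ℝ → Ω → Fin m → ℝ) (T : ℝ)
    (H : ℝ → Ω → Matrix (Fin n) (Fin m) ℝ) (I : Ω → Fin n → ℝ) : Prop :=
  ∀ ε > (0 : ℝ), ∃ (N : ℕ) (τ : ℕ → ℝ) (ξ : ℕ → Ω → Matrix (Fin n) (Fin m) ℝ),
    Monotone τ ∧ τ 0 = 0 ∧ τ N = T ∧
    (∀ i j k, Measurable[F (τ i)] (fun ω => ξ i ω j k)) ∧
    (∫ ω, vsq (I ω - simpleInt B N τ ξ ω) ∂P) ≤ ε ∧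
    (∫ ω, ∫ t in Set.Ioc 0 T, msq (H t ω -
        ∑ i ∈ Finset.range N, Set.indicator (Set.Ioc (τ i) (τ (i + 1)))
          (fun _ => ξ i ω) t) ∂volume ∂P) ≤ ε

/-- Elementary stochastic integral, scalar case. -/
def simpleInt1 {Ω : Type*} (B : ℝ → Ω → ℝ) (N : ℕ) (τ : ℕ → ℝ)
    (ξ : ℕ → Ω → ℝ) (ω : Ω) : ℝ :=
  ∑ i ∈ Finset.range N, ξ i ω * (B (τ (i + 1)) ω - B (τ i) ω)

/-- `I` is the scalar Itô stochastic integral `∫₀ᵀ H dB`. -/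
def IsItoInt1 {Ω : Type*} {mΩ : MeasurableSpace Ω} (P : Measure Ω)
    (F : ℝ → MeasurableSpace Ω) (B : ℝ → Ω → ℝ) (T : ℝ)
    (H : ℝ → Ω → ℝ) (I : Ω → ℝ) : Prop :=
  ∀ ε > (0 : ℝ), ∃ (N : ℕ) (τ : ℕ → ℝ) (ξ : ℕ → Ω → ℝ),
    Monotone τ ∧ τ 0 = 0 ∧ τ N = T ∧
    (∀ i, Measurable[F (τ i)] (ξ i)) ∧
    (∫ ω, (I ω - simpleInt1 B N τ ξ ω) ^ 2 ∂P) ≤ ε ∧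
    (∫ ω, ∫ t in Set.Ioc 0 T, (H t ω -
        ∑ i ∈ Finset.range N, Set.indicator (Set.Ioc (τ i) (τ (i + 1)))
          (fun _ => ξ i ω) t) ^ 2 ∂volume ∂P) ≤ ε

/-- The filtration generated by the first `r` components of the process `W` up to time `t`. -/
def filtr {Ω : Type*} {m r : ℕ} (hrm : r ≤ m) (W : ℝ → Ω → Fin m → ℝ) (t : ℝ) :
    MeasurableSpace Ω :=
  MeasurableSpace.comap
    (fun ω (p : {s : ℝ // 0 ≤ s ∧ s ≤ t} × Fin r) => W p.1.1 ω (Fin.castLE hrm p.2))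
    MeasurableSpace.pi

/-- `X` together with the conditional-law flow `μflow` is a strong solution of the
conditional McKean–Vlasov SDE
`dX_t = b(t,ω,X_t,L(X_t|G_t)) dt + σ'(t,ω,X_t,L(X_t|G_t)) dW_t`, `X_0 = x₀`, on `[0,T]`. -/
def SolvesCMKV {Ω : Type*} {n m : ℕ} {mΩ : MeasurableSpace Ω} (P : Measure Ω)
    (F G : ℝ → MeasurableSpace Ω) (W : ℝ → Ω → Fin m → ℝ) (T : ℝ) (x₀ : Fin n → ℝ)
    (b : ℝ → Ω → (Fin n → ℝ) → Measure (Fin n → ℝ) → Fin n → ℝ)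
    (σ' : ℝ → Ω → (Fin n → ℝ) → Measure (Fin n → ℝ) → Matrix (Fin n) (Fin m) ℝ)
    (X : ℝ → Ω → Fin n → ℝ) (μflow : ℝ → Ω → Measure (Fin n → ℝ)) : Prop :=
  (∀ t, Measurable[F t] (X t)) ∧ (∀ ω, Continuous fun t => X t ω) ∧
  (∀ ω, X 0 ω = x₀) ∧
  (∀ t, IsCondDistrib (X t) P (G t) (μflow t)) ∧
  ∀ t ∈ Set.Icc (0 : ℝ) T, ∃ I : Ω → Fin n → ℝ,
    IsItoInt P F W t (fun s ω => σ' s ω (X s ω) (μflow s ω)) I ∧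
    ∀ᵐ ω ∂P, X t ω = x₀ + (∫ s in Set.Ioc 0 t, b s ω (X s ω) (μflow s ω)) + I ω

/-- Lipschitz continuity of the coefficients of a conditional McKean–Vlasov SDE, in the
state variable and the measure variable (in the 2-Wasserstein distance). -/
def LipCMKV {Ω : Type*} {n m : ℕ} (K : ℝ)
    (b : ℝ → Ω → (Fin n → ℝ) → Measure (Fin n → ℝ) → Fin n → ℝ)
    (σ' : ℝ → Ω → (Fin n → ℝ) → Measure (Fin n → ℝ) → Matrix (Fin n) (Fin m) ℝ) : Prop :=
  ∀ (t : ℝ) (ω : Ω) (x x' : Fin n → ℝ) (μ ν : Measure (Fin n → ℝ)),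
    IsProbabilityMeasure μ → IsProbabilityMeasure ν →
    Real.sqrt (vsq (b t ω x μ - b t ω x' ν)) + Real.sqrt (msq (σ' t ω x μ - σ' t ω x' ν)) ≤
      K * (Real.sqrt (vsq (x - x')) + W2 μ ν)

/-- Adaptedness of the (possibly random) coefficients to the sub-filtration `G`. -/
def CoeffAdapted {Ω : Type*} {n m : ℕ} (G : ℝ → MeasurableSpace Ω)
    (b : ℝ → Ω → (Fin n → ℝ) → Measure (Fin n → ℝ) → Fin n → ℝ)
    (σ' : ℝ → Ω → (Fin n → ℝ) → Measure (Fin n → ℝ) → Matrix (Fin n) (Fin m) ℝ) : Prop :=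
  ∀ (t : ℝ) (x : Fin n → ℝ) (μ : Measure (Fin n → ℝ)),
    Measurable[G t] (fun ω => b t ω x μ) ∧
    ∀ i j, Measurable[G t] (fun ω => σ' t ω x μ i j)

/-- Integrability of the coefficients at the origin, with exponent `p`. -/
def IntegAtZero {Ω : Type*} {n m : ℕ} {mΩ : MeasurableSpace Ω} (P : Measure Ω) (T p : ℝ)
    (b : ℝ → Ω → (Fin n → ℝ) → Measure (Fin n → ℝ) → Fin n → ℝ)
    (σ' : ℝ → Ω → (Fin n → ℝ) → Measure (Fin n → ℝ) → Matrix (Fin n) (Fin m) ℝ) : Prop :=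
  (∫⁻ ω, ∫⁻ t in Set.Ioc 0 T, ENNReal.ofReal
      (Real.sqrt (vsq (b t ω 0 (Measure.dirac 0))) ^ p +
        Real.sqrt (msq (σ' t ω 0 (Measure.dirac 0))) ^ p) ∂volume ∂P) < ⊤


open Set

section Gronwall

theorem le_add_mul_exp_mul_integral_of_le_add_mul_integral {Z A : ℝ → ℝ} {K t : ℝ}
    (hK : 0 ≤ K) (ht : 0 ≤ t) (hZ : Continuous Z) (hA : Continuous A)
    (hA0 : ∀ u ∈ Icc 0 t, 0 ≤ A u)
    (h : ∀ u ∈ Icc 0 t, Z u ≤ A u + K * ∫ s in Ioc 0 u, Z s) :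
    Z t ≤ A t + K * Real.exp (K * t) * ∫ s in Ioc 0 t, A s := by
  have h' : ∀ u ∈ Icc 0 t, Z u ≤ A u + K * ∫ s in (0)..u, Z s := fun u hu => by
    rw [intervalIntegral.integral_of_le hu.1]; exact h u hu
  -- variation of constants
  set φ : ℝ → ℝ := fun u =>
    Real.exp (-(K * u)) * (∫ s in (0)..u, Z s) - ∫ s in (0)..u, A s
  have hφ' : ∀ u, HasDerivAt φ (Real.exp (-(K * u)) * (-K) * (∫ s in (0)..u, Z s)
      + Real.exp (-(K * u)) * Z u - A u) u := fun u => by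
    have hexp : HasDerivAt (fun u => Real.exp (-(K * u))) (Real.exp (-(K * u)) * (-K)) u := by
      simpa using ((hasDerivAt_id u).const_mul K).neg.exp
    exact (hexp.mul (hZ.integral_hasStrictDerivAt 0 u).hasDerivAt).sub
      (hA.integral_hasStrictDerivAt 0 u).hasDerivAt
  have hanti : AntitoneOn φ (Icc 0 t) := by
    refine antitoneOn_of_deriv_nonpos (convex_Icc 0 t)
      (HasDerivAt.continuousOn fun u _ => hφ' u)
      (fun u _ => (hφ' u).differentiableAt.differentiableWithinAt) fun u hu => ?_
    rw [interior_Icc] at hu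
    have hu' : u ∈ Icc 0 t := Ioo_subset_Icc_self hu
    have hexp_le : Real.exp (-(K * u)) ≤ 1 := Real.exp_le_one_iff.2 (by nlinarith [hu.1])
    rw [(hφ' u).deriv]
    nlinarith [h' u hu', Real.exp_pos (-(K * u)), hA0 u hu']
  have hφt : φ t ≤ 0 := by
    simpa [φ] using hanti ⟨le_rfl, ht⟩ ⟨ht, le_rfl⟩ ht
  have hv : ∫ s in (0)..t, Z s ≤ Real.exp (K * t) * ∫ s in Ioc 0 t, A s := by
    rw [← intervalIntegral.integral_of_le ht]
    have := mul_le_mul_of_nonneg_left (show Real.exp (-(K * t)) * (∫ s in (0)..t, Z s)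
      ≤ ∫ s in (0)..t, A s by simp only [φ] at hφt; linarith) (Real.exp_pos (K * t)).le
    rwa [← mul_assoc, ← Real.exp_add, add_neg_cancel, Real.exp_zero, one_mul] at this
  calc Z t ≤ A t + K * ∫ s in (0)..t, Z s := h' t ⟨ht, le_rfl⟩
    _ ≤ A t + K * Real.exp (K * t) * ∫ s in Ioc 0 t, A s := by
      rw [mul_assoc]; gcongr

theorem le_exp_mul_of_le_add_mul_integral {Z : ℝ → ℝ} {A K t : ℝ}
    (hK : 0 ≤ K) (ht : 0 ≤ t) (hZ : Continuous Z) (hA : 0 ≤ A)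
    (h : ∀ u ∈ Icc 0 t, Z u ≤ A + K * ∫ s in Ioc 0 u, Z s) :
    Z t ≤ Real.exp (2 * K * t) * A := by
  have hG := le_add_mul_exp_mul_integral_of_le_add_mul_integral hK ht hZ continuous_const
    (fun _ _ => hA) h
  rw [setIntegral_const, Real.volume_real_Ioc_of_le ht, sub_zero, smul_eq_mul] at hG
  have hexp : 1 + K * t * Real.exp (K * t) ≤ Real.exp (2 * K * t) := by
    rw [show 2 * K * t = K * t + K * t by ring, Real.exp_add]
    nlinarith [Real.add_one_le_exp (K * t), Real.one_le_exp (mul_nonneg hK ht)]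
  nlinarith [mul_le_mul_of_nonneg_right hexp hA]

theorem le_exp_mul_iSup_of_le_add_mul_integral {Z f : ℝ → ℝ} {c K t : ℝ}
    (hc : 0 ≤ c) (hK : 0 ≤ K) (ht : 0 ≤ t) (hZ : Continuous Z) (hf : Continuous f)
    (h : ∀ u ∈ Icc 0 t, Z u ≤ c * |f u| + K * ∫ s in Ioc 0 u, Z s) :
    Z t ≤ Real.exp (2 * K * t) * c * ⨆ s : Icc 0 t, |f s| := by
  have hbdd : BddAbove (range fun s : Icc 0 t => |f s|) :=
    (isCompact_range (by fun_prop)).bddAbove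
  rw [mul_assoc]
  refine le_exp_mul_of_le_add_mul_integral hK ht hZ
    (mul_nonneg hc (Real.iSup_nonneg fun _ => abs_nonneg _)) fun u hu => (h u hu).trans ?_
  gcongr
  exact le_ciSup hbdd (⟨u, hu⟩ : Icc 0 t)

end Gronwall

section LinearSystem

theorem abs_add_integral_sub_add_integral_le {f g : ℝ → ℝ} {u : ℝ} (x n m : ℝ)
    (hf : IntegrableOn f (Ioc 0 u)) (hg : IntegrableOn g (Ioc 0 u)) :
    |(x + (∫ s in Ioc 0 u, f s) + n) - (x + (∫ s in Ioc 0 u, g s) + m)|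
      ≤ |n - m| + ∫ s in Ioc 0 u, |f s - g s| := by
  have hsub : (∫ s in Ioc 0 u, f s) - ∫ s in Ioc 0 u, g s = ∫ s in Ioc 0 u, (f s - g s) :=
    (integral_sub hf hg).symm
  calc |(x + (∫ s in Ioc 0 u, f s) + n) - (x + (∫ s in Ioc 0 u, g s) + m)|
      = |(∫ s in Ioc 0 u, (f s - g s)) + (n - m)| := by rw [← hsub]; ring_nf
    _ ≤ |∫ s in Ioc 0 u, (f s - g s)| + |n - m| := abs_add_le _ _
    _ ≤ |n - m| + ∫ s in Ioc 0 u, |f s - g s| := by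
      rw [add_comm]; gcongr; exact abs_integral_le_integral_abs

theorem exists_linear_system_bound {a b c T : ℝ} {S00 S01 : ℝ → ℝ}
    (hS00 : Continuous S00) (hS01 : Continuous S01) :
    ∃ K, 0 ≤ K ∧
      ∀ s ∈ Icc 0 T, b ^ 2 / 2 * |S00 s| + |c| ≤ K ∧ |a| + b ^ 2 / 2 * |S01 s| ≤ K := by
  obtain ⟨M0, hM0⟩ := (isCompact_Icc (a := 0) (b := T)).exists_bound_of_continuousOn
    hS00.continuousOn
  obtain ⟨M1, hM1⟩ := (isCompact_Icc (a := 0) (b := T)).exists_bound_of_continuousOn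
    hS01.continuousOn
  refine ⟨|a| + |c| + b ^ 2 / 2 * (|M0| + |M1|), by positivity, fun s hs => ⟨?_, ?_⟩⟩
  · have : |S00 s| ≤ |M0| := (hM0 s hs).trans (le_abs_self M0)
    nlinarith [abs_nonneg a, abs_nonneg M1, sq_nonneg b]
  · have : |S01 s| ≤ |M1| := (hM1 s hs).trans (le_abs_self M1)
    nlinarith [abs_nonneg c, abs_nonneg M0, sq_nonneg b]

theorem abs_sub_add_abs_sub_le_of_linear_system {a b c x00 x0 K T : ℝ}
    {S00 S01 y0 y z0 z w e : ℝ → ℝ} (hS00 : Continuous S00) (hS01 : Continuous S01)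
    (hy0 : Continuous y0) (hy : Continuous y) (hz0 : Continuous z0) (hz : Continuous z)
    (hK : ∀ s ∈ Icc 0 T, b ^ 2 / 2 * |S00 s| + |c| ≤ K ∧ |a| + b ^ 2 / 2 * |S01 s| ≤ K)
    (hy_eq : ∀ u ∈ Icc 0 T,
      y0 u = x00 + (∫ s in Ioc 0 u, (a * y s - b ^ 2 / 2 * (S00 s * y0 s + S01 s * y s)))
        + w u ∧
      y u = x0 + (∫ s in Ioc 0 u, c * y0 s) + e u)
    (hz_eq : ∀ u ∈ Icc 0 T,
      z0 u = x00 + (∫ s in Ioc 0 u, (a * z s - b ^ 2 / 2 * (S00 s * z0 s + S01 s * z s)))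
        + w u ∧
      z u = x0 + (∫ s in Ioc 0 u, c * z0 s)) :
    ∀ u ∈ Icc 0 T, |y0 u - z0 u| + |y u - z u|
      ≤ |e u| + K * ∫ s in Ioc 0 u, (|y0 s - z0 s| + |y s - z s|) := by
  intro u hu
  set f0 : ℝ → ℝ := fun s => a * y s - b ^ 2 / 2 * (S00 s * y0 s + S01 s * y s)
  set g0 : ℝ → ℝ := fun s => a * z s - b ^ 2 / 2 * (S00 s * z0 s + S01 s * z s)
  have hf0 : Continuous f0 := by fun_prop
  have hg0 : Continuous g0 := by fun_prop
  have h0 : |y0 u - z0 u| ≤ ∫ s in Ioc 0 u, |f0 s - g0 s| := by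
    rw [(hy_eq u hu).1, (hz_eq u hu).1]
    simpa using abs_add_integral_sub_add_integral_le x00 (w u) (w u)
      hf0.integrableOn_Ioc hg0.integrableOn_Ioc
  have h1 : |y u - z u| ≤ |e u| + ∫ s in Ioc 0 u, |c * y0 s - c * z0 s| := by
    rw [(hy_eq u hu).2, (hz_eq u hu).2, ← add_zero (x0 + ∫ s in Ioc 0 u, c * z0 s)]
    simpa using abs_add_integral_sub_add_integral_le x0 (e u) 0
      (hy0.const_mul c).integrableOn_Ioc (hz0.const_mul c).integrableOn_Ioc
  have hpt : ∀ s ∈ Ioc 0 u, |f0 s - g0 s| + |c * y0 s - c * z0 s|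
      ≤ K * (|y0 s - z0 s| + |y s - z s|) := fun s hs => by
    obtain ⟨hK0, hK1⟩ := hK s ⟨hs.1.le, hs.2.trans hu.2⟩
    have hb : 0 ≤ b ^ 2 / 2 := by positivity
    calc |f0 s - g0 s| + |c * y0 s - c * z0 s|
        = |a * (y s - z s) - b ^ 2 / 2 * (S00 s * (y0 s - z0 s) + S01 s * (y s - z s))|
          + |c| * |y0 s - z0 s| := by simp only [f0, g0, ← mul_sub, abs_mul]; ring_nf
      _ ≤ |a| * |y s - z s| + b ^ 2 / 2 * (|S00 s| * |y0 s - z0 s| + |S01 s| * |y s - z s|)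
          + |c| * |y0 s - z0 s| := by
        gcongr
        refine (abs_sub _ _).trans ?_
        rw [abs_mul, abs_mul, abs_of_nonneg hb]
        gcongr
        exact (abs_add_le _ _).trans (by rw [abs_mul, abs_mul])
      _ = (b ^ 2 / 2 * |S00 s| + |c|) * |y0 s - z0 s|
          + (|a| + b ^ 2 / 2 * |S01 s|) * |y s - z s| := by ring
      _ ≤ K * (|y0 s - z0 s| + |y s - z s|) := by
        nlinarith [mul_le_mul_of_nonneg_right hK0 (abs_nonneg (y0 s - z0 s)),
          mul_le_mul_of_nonneg_right hK1 (abs_nonneg (y s - z s))]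
  have hint : (∫ s in Ioc 0 u, |f0 s - g0 s|) + ∫ s in Ioc 0 u, |c * y0 s - c * z0 s|
      ≤ K * ∫ s in Ioc 0 u, (|y0 s - z0 s| + |y s - z s|) := by
    rw [← integral_add (by fun_prop : Continuous fun s => |f0 s - g0 s|).integrableOn_Ioc
      (by fun_prop : Continuous fun s => |c * y0 s - c * z0 s|).integrableOn_Ioc,
      ← integral_const_mul]
    exact setIntegral_mono_on
      (by fun_prop : Continuous fun s => |f0 s - g0 s| + |c * y0 s - c * z0 s|).integrableOn_Ioc
      (by fun_prop : Continuous fun s => K * (|y0 s - z0 s| + |y s - z s|)).integrableOn_Ioc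
      measurableSet_Ioc hpt
  linarith

end LinearSystem

theorem sq_integral_abs_le_mul_integral_sq {α : Type*} [MeasurableSpace α] {μ : Measure α}
    [IsFiniteMeasure μ] {f : α → ℝ} (hf : Integrable f μ)
    (hf2 : Integrable (fun x => f x ^ 2) μ) :
    (∫ x, |f x| ∂μ) ^ 2 ≤ μ.real univ * ∫ x, f x ^ 2 ∂μ := by
  set I := ∫ x, |f x| ∂μ
  set m := μ.real univ
  rcases (measureReal_nonneg : 0 ≤ m).eq_or_lt with hm | hm
  · have hμ : μ = 0 := Measure.measure_univ_eq_zero.1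
      ((measureReal_eq_zero_iff (measure_ne_top μ univ)).1 hm.symm)
    simp [I, hμ]
  -- integrate `2 c |f| ≤ f ^ 2 + c ^ 2`, then choose `c = I / m`
  have key : ∀ c : ℝ, 2 * c * I ≤ (∫ x, f x ^ 2 ∂μ) + c ^ 2 * m := fun c => by
    have h := integral_mono (hf.abs.const_mul (2 * c)) (hf2.add (integrable_const (c ^ 2)))
      fun x => show 2 * c * |f x| ≤ f x ^ 2 + c ^ 2 by
        nlinarith [sq_nonneg (|f x| - c), sq_abs (f x)]
    rwa [integral_const_mul, Pi.add_def, integral_add hf2 (integrable_const _), integral_const,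
      smul_eq_mul, mul_comm (μ.real univ)] at h
  have h := key (I / m)
  rw [div_pow, div_mul_eq_mul_div, sq m, ← div_div, mul_div_assoc, div_self hm.ne',
    mul_one, show 2 * (I / m) * I = 2 * (I ^ 2 / m) by ring] at h
  have h2 : I ^ 2 / m ≤ ∫ x, f x ^ 2 ∂μ := by linarith
  rwa [div_le_iff₀ hm, mul_comm] at h2

section PathSeminorm

/-- At time `t`, Gronwall's inequality bounds the response of the system to a forcing path `f`
by a multiple of this seminorm. -/
def pathSeminorm (t : ℝ) (f : ℝ → ℝ) : ℝ := |f t| + ∫ s in Ioc 0 t, |f s|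

theorem pathSeminorm_nonneg (t : ℝ) (f : ℝ → ℝ) : 0 ≤ pathSeminorm t f :=
  add_nonneg (abs_nonneg _) (integral_nonneg fun _ => abs_nonneg _)

theorem pathSeminorm_add_le {t : ℝ} {f g : ℝ → ℝ} (hf : Continuous f) (hg : Continuous g) :
    pathSeminorm t (fun s => f s + g s) ≤ pathSeminorm t f + pathSeminorm t g := by
  have hint :
      ∫ s in Ioc 0 t, |f s + g s| ≤ (∫ s in Ioc 0 t, |f s|) + ∫ s in Ioc 0 t, |g s| := by
    rw [← integral_add (by fun_prop : Continuous fun s => |f s|).integrableOn_Ioc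
      (by fun_prop : Continuous fun s => |g s|).integrableOn_Ioc]
    exact integral_mono (by fun_prop : Continuous fun s => |f s + g s|).integrableOn_Ioc
      (by fun_prop : Continuous fun s => |f s| + |g s|).integrableOn_Ioc fun s => abs_add_le _ _
  unfold pathSeminorm
  linarith [abs_add_le (f t) (g t)]

theorem pathSeminorm_sum_le {ι : Type*} {t : ℝ} (I : Finset ι) {f : ι → ℝ → ℝ}
    (hf : ∀ i, Continuous (f i)) :
    pathSeminorm t (fun s => ∑ i ∈ I, f i s) ≤ ∑ i ∈ I, pathSeminorm t (f i) := by
  induction I using Finset.cons_induction with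
  | empty => simp [pathSeminorm]
  | cons i I hi ih =>
    simp only [Finset.sum_cons]
    exact (pathSeminorm_add_le (hf i) (continuous_finsetSum _ fun j _ => hf j)).trans
      (add_le_add_right ih _)

theorem pathSeminorm_sum_Icc_le {f : ℕ → ℝ → ℝ} (hf : ∀ i, Continuous (f i)) (t : ℝ)
    {m N M : ℕ} (hm : m ≤ N) (hM : N ≤ M) :
    pathSeminorm t (fun s => ∑ i ∈ Finset.Icc 1 N, f i s)
      ≤ pathSeminorm t (fun s => ∑ i ∈ Finset.Icc 1 m, f i s)
        + ∑ i ∈ Finset.Ioc m M, pathSeminorm t (f i) := by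
  have hIcc : ∀ n, Finset.Icc 1 n = Finset.Ioc 0 n := fun n => by
    simpa using Finset.Icc_add_one_left_eq_Ioc 0 n
  have hsplit : (fun s => ∑ i ∈ Finset.Icc 1 N, f i s) = fun s =>
      ∑ i ∈ Finset.Icc 1 m, f i s + ∑ i ∈ Finset.Ioc m N, f i s := by
    ext s; rw [hIcc, hIcc, Finset.sum_Ioc_consecutive _ (Nat.zero_le _) hm]
  rw [hsplit]
  refine (pathSeminorm_add_le (continuous_finsetSum _ fun i _ => hf i)
    (continuous_finsetSum _ fun i _ => hf i)).trans (add_le_add le_rfl ?_)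
  exact (pathSeminorm_sum_le _ hf).trans (Finset.sum_le_sum_of_subset_of_nonneg
    (Finset.Ioc_subset_Ioc_right hM) fun _ _ _ => pathSeminorm_nonneg _ _)

theorem le_mul_pathSeminorm_of_le_add_mul_integral {Z f : ℝ → ℝ} {c K t : ℝ}
    (hc : 0 ≤ c) (hK : 0 ≤ K) (ht : 0 ≤ t) (hZ : Continuous Z) (hf : Continuous f)
    (h : ∀ u ∈ Icc 0 t, Z u ≤ c * |f u| + K * ∫ s in Ioc 0 u, Z s) :
    Z t ≤ (1 + K * Real.exp (K * t)) * c * pathSeminorm t f := by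
  have hG := le_add_mul_exp_mul_integral_of_le_add_mul_integral hK ht hZ (by fun_prop)
    (fun u _ => mul_nonneg hc (abs_nonneg _)) h
  rw [integral_const_mul] at hG
  have hKe : 0 ≤ K * Real.exp (K * t) := by positivity
  have hf0 : 0 ≤ c * ∫ s in Ioc 0 t, |f s| :=
    mul_nonneg hc (integral_nonneg fun _ => abs_nonneg _)
  unfold pathSeminorm
  nlinarith [mul_nonneg hc (abs_nonneg (f t))]

theorem sq_pathSeminorm_le {t : ℝ} {f : ℝ → ℝ} (ht : 0 ≤ t) (hf : Continuous f) :
    pathSeminorm t f ^ 2 ≤ 2 * f t ^ 2 + 2 * t * ∫ s in Ioc 0 t, f s ^ 2 := by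
  have : IsFiniteMeasure (volume.restrict (Ioc (0 : ℝ) t)) := by
    rw [isFiniteMeasure_restrict]; exact measure_Ioc_lt_top.ne
  have hcs := sq_integral_abs_le_mul_integral_sq (μ := volume.restrict (Ioc (0 : ℝ) t))
    hf.integrableOn_Ioc (hf.pow 2).integrableOn_Ioc
  rw [measureReal_restrict_apply_univ, Real.volume_real_Ioc_of_le ht, sub_zero] at hcs
  unfold pathSeminorm
  nlinarith [sq_nonneg (|f t| - ∫ s in Ioc 0 t, |f s|), sq_abs (f t)]

variable {Ω : Type*} [MeasurableSpace Ω] {X : ℝ → Ω → ℝ}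

theorem measurable_pathSeminorm (hX : Measurable (Function.uncurry X)) (t : ℝ) :
    Measurable fun ω => pathSeminorm t fun s => X s ω :=
  (hX.of_uncurry_left.abs).add
    (hX.abs.stronglyMeasurable.integral_prod_left' (μ := volume.restrict (Ioc 0 t))).measurable

theorem lintegral_sq_pathSeminorm_le {μ : Measure Ω} [SFinite μ]
    (hX : Measurable (Function.uncurry X)) (hcont : ∀ ω, Continuous fun s => X s ω)
    {t m : ℝ} (ht : 0 ≤ t) (hm : 0 ≤ m)
    (hXm : ∀ s ∈ Icc 0 t, ∫⁻ ω, ENNReal.ofReal (X s ω ^ 2) ∂μ ≤ ENNReal.ofReal m) :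
    ∫⁻ ω, ENNReal.ofReal ((pathSeminorm t fun s => X s ω) ^ 2) ∂μ
      ≤ ENNReal.ofReal (2 * (1 + t ^ 2) * m) := by
  have hX2 : Measurable fun p : ℝ × Ω => ENNReal.ofReal (X p.1 p.2 ^ 2) :=
    (hX.pow_const 2).ennreal_ofReal
  have hsplit : ∀ ω, ENNReal.ofReal (2 * X t ω ^ 2 + 2 * t * ∫ s in Ioc 0 t, X s ω ^ 2)
      = ENNReal.ofReal 2 * ENNReal.ofReal (X t ω ^ 2)
        + ENNReal.ofReal (2 * t) * ∫⁻ s in Ioc 0 t, ENNReal.ofReal (X s ω ^ 2) := fun ω => by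
    have hint : IntegrableOn (fun s => X s ω ^ 2) (Ioc 0 t) :=
      ((hcont ω).pow 2).integrableOn_Ioc
    rw [ENNReal.ofReal_add (by positivity)
        (mul_nonneg (by positivity) (integral_nonneg fun _ => sq_nonneg _)),
      ENNReal.ofReal_mul zero_le_two, ENNReal.ofReal_mul (by positivity),
      ofReal_integral_eq_lintegral_ofReal hint (ae_of_all _ fun _ => sq_nonneg _)]
  calc ∫⁻ ω, ENNReal.ofReal ((pathSeminorm t fun s => X s ω) ^ 2) ∂μ
      ≤ ∫⁻ ω, ENNReal.ofReal (2 * X t ω ^ 2 + 2 * t * ∫ s in Ioc 0 t, X s ω ^ 2) ∂μ :=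
        lintegral_mono fun ω => ENNReal.ofReal_le_ofReal (sq_pathSeminorm_le ht (hcont ω))
    _ = ENNReal.ofReal 2 * ∫⁻ ω, ENNReal.ofReal (X t ω ^ 2) ∂μ
        + ENNReal.ofReal (2 * t) *
          ∫⁻ s in Ioc 0 t, ∫⁻ ω, ENNReal.ofReal (X s ω ^ 2) ∂μ := by
      simp_rw [hsplit]
      rw [lintegral_add_left ((hX.of_uncurry_left.pow_const 2).ennreal_ofReal.const_mul _),
        lintegral_const_mul' _ _ ENNReal.ofReal_ne_top,
        lintegral_const_mul' _ _ ENNReal.ofReal_ne_top,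
        lintegral_lintegral_swap (f := fun ω s => ENNReal.ofReal (X s ω ^ 2))
          (hX2.comp measurable_swap).aemeasurable]
    _ ≤ ENNReal.ofReal 2 * ENNReal.ofReal m
        + ENNReal.ofReal (2 * t) * ∫⁻ _ in Ioc 0 t, ENNReal.ofReal m := by
      gcongr ENNReal.ofReal 2 * ?_ + ENNReal.ofReal (2 * t) * ?_
      · exact hXm t ⟨ht, le_rfl⟩
      · exact setLIntegral_mono measurable_const fun s hs => hXm s ⟨hs.1.le, hs.2⟩
    _ = ENNReal.ofReal (2 * (1 + t ^ 2) * m) := by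
      rw [setLIntegral_const, Real.volume_Ioc, sub_zero, ← ENNReal.ofReal_mul hm,
        ← ENNReal.ofReal_mul (by positivity), ← ENNReal.ofReal_mul (by positivity),
        ← ENNReal.ofReal_add (by positivity) (by positivity)]
      congr 1; ring

end PathSeminorm

section SecondMomentStrongLaw

variable {Ω : Type*} [MeasurableSpace Ω] {μ : Measure Ω}

theorem ae_tendsto_zero_of_tsum_lintegral_ne_top {Y : ℕ → Ω → ℝ≥0∞}
    (hY : ∀ k, AEMeasurable (Y k) μ) (h : ∑' k, ∫⁻ ω, Y k ω ∂μ ≠ ∞) :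
    ∀ᵐ ω ∂μ, Tendsto (fun k => Y k ω) atTop (𝓝 0) := by
  rw [← lintegral_tsum hY] at h
  filter_upwards [ae_lt_top' (AEMeasurable.tsum hY) h] with ω hω
  exact ENNReal.tendsto_atTop_zero_of_tsum_ne_top hω.ne

theorem ae_tendsto_div_sq_of_lintegral_sq_le {Y : ℕ → Ω → ℝ}
    (hY : ∀ k, AEMeasurable (Y k) μ) {C : ℝ} (hC : 0 ≤ C)
    (hYC : ∀ k : ℕ, 1 ≤ k →
      ∫⁻ ω, ENNReal.ofReal (Y k ω ^ 2) ∂μ ≤ ENNReal.ofReal (C * k ^ 2)) :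
    ∀ᵐ ω ∂μ, Tendsto (fun k => Y k ω / (k : ℝ) ^ 2) atTop (𝓝 0) := by
  have hbound : ∀ k : ℕ, ∫⁻ ω, ENNReal.ofReal ((Y k ω / (k : ℝ) ^ 2) ^ 2) ∂μ
      ≤ ENNReal.ofReal (C / (k : ℝ) ^ 2) := fun k => by
    rcases Nat.eq_zero_or_pos k with rfl | hk
    · simp
    simp_rw [div_pow, div_eq_mul_inv (Y _ _ ^ 2), ENNReal.ofReal_mul (sq_nonneg _)]
    rw [lintegral_mul_const'' _ ((hY k).pow_const 2).ennreal_ofReal]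
    calc _ ≤ ENNReal.ofReal (C * k ^ 2) * ENNReal.ofReal ((((k : ℝ) ^ 2) ^ 2)⁻¹) := by
          gcongr; exact hYC k hk
      _ = ENNReal.ofReal (C / (k : ℝ) ^ 2) := by
          rw [← ENNReal.ofReal_mul (by positivity)]; congr 1; field_simp
  have hsum : ∑' k : ℕ, ENNReal.ofReal (C / (k : ℝ) ^ 2) ≠ ∞ := by
    rw [← ENNReal.ofReal_tsum_of_nonneg (fun k => by positivity)
      ((Real.summable_one_div_nat_pow.2 one_lt_two).mul_left C |>.congr fun k => by ring)]
    exact ENNReal.ofReal_ne_top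
  filter_upwards [ae_tendsto_zero_of_tsum_lintegral_ne_top
    (fun k => (((hY k).div_const _).pow_const 2).ennreal_ofReal)
    (ne_top_of_le_ne_top hsum (ENNReal.tsum_le_tsum hbound))] with ω hω
  have hsq : Tendsto (fun k => (Y k ω / (k : ℝ) ^ 2) ^ 2) atTop (𝓝 0) := by
    refine ((ENNReal.tendsto_toReal ENNReal.zero_ne_top).comp hω).congr fun k => ?_
    simp [ENNReal.toReal_ofReal (sq_nonneg _)]
  rw [tendsto_zero_iff_abs_tendsto_zero]
  simpa [Function.comp_def, Real.sqrt_sq_eq_abs] using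
    (Real.continuous_sqrt.tendsto 0).comp hsq

theorem tendsto_div_of_le_add_on_squares {q g : ℕ → ℝ} (hq0 : ∀ N, 0 ≤ q N)
    (hgap : ∀ k N, k ^ 2 ≤ N → N < (k + 1) ^ 2 → q N ≤ q (k ^ 2) + g k)
    (hq : Tendsto (fun k => q (k ^ 2) / (k : ℝ) ^ 2) atTop (𝓝 0))
    (hg : Tendsto (fun k => g k / (k : ℝ) ^ 2) atTop (𝓝 0)) :
    Tendsto (fun N => q N / N) atTop (𝓝 0) := by
  have hsqrt : Tendsto Nat.sqrt atTop atTop :=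
    tendsto_atTop_atTop.2 fun b => ⟨b ^ 2, fun N hN => Nat.le_sqrt'.2 hN⟩
  refine squeeze_zero' (Eventually.of_forall fun N => div_nonneg (hq0 N) N.cast_nonneg)
    ?_ (by simpa using (hq.add hg).comp hsqrt)
  filter_upwards [eventually_ge_atTop 1] with N hN
  set k := Nat.sqrt N
  have hk2 : (k : ℝ) ^ 2 ≤ N := by exact_mod_cast Nat.sqrt_le' N
  have hk0 : (0 : ℝ) < (k : ℝ) ^ 2 := by
    have : 0 < k := Nat.sqrt_pos.2 hN
    positivity
  calc q N / N ≤ q N / (k : ℝ) ^ 2 := div_le_div_of_nonneg_left (hq0 N) hk0 hk2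
    _ ≤ (q (k ^ 2) + g k) / (k : ℝ) ^ 2 := by
      gcongr; exact hgap k N (Nat.sqrt_le' N) (Nat.lt_succ_sqrt' N)
    _ = _ := add_div _ _ _

theorem ae_tendsto_div_of_lintegral_sq_le {q g : ℕ → Ω → ℝ} {C : ℝ} (hC : 0 ≤ C)
    (hq0 : ∀ N ω, 0 ≤ q N ω) (hqm : ∀ N, AEMeasurable (q N) μ)
    (hgm : ∀ k, AEMeasurable (g k) μ)
    (hgap : ∀ ω k N, k ^ 2 ≤ N → N < (k + 1) ^ 2 → q N ω ≤ q (k ^ 2) ω + g k ω)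
    (hq : ∀ N : ℕ, ∫⁻ ω, ENNReal.ofReal (q N ω ^ 2) ∂μ ≤ ENNReal.ofReal (C * N))
    (hg : ∀ k : ℕ, 1 ≤ k →
      ∫⁻ ω, ENNReal.ofReal (g k ω ^ 2) ∂μ ≤ ENNReal.ofReal (C * k ^ 2)) :
    ∀ᵐ ω ∂μ, Tendsto (fun N => q N ω / N) atTop (𝓝 0) := by
  have hsq := ae_tendsto_div_sq_of_lintegral_sq_le (fun k => hqm (k ^ 2)) hC
    fun k _ => by exact_mod_cast hq (k ^ 2)
  filter_upwards [hsq, ae_tendsto_div_sq_of_lintegral_sq_le hgm hC hg] with ω h1 h2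
  exact tendsto_div_of_le_add_on_squares (hq0 · ω) (hgap ω) h1 h2

theorem lintegral_sq_sum_le {ι : Type*} (J : Finset ι) {Y : ι → Ω → ℝ}
    (hY : ∀ i, Measurable (Y i)) {c : ℝ}
    (hc : ∀ i ∈ J, ∫⁻ ω, ENNReal.ofReal (Y i ω ^ 2) ∂μ ≤ ENNReal.ofReal c) :
    ∫⁻ ω, ENNReal.ofReal ((∑ i ∈ J, Y i ω) ^ 2) ∂μ
      ≤ ENNReal.ofReal (J.card ^ 2 * c) := by
  calc ∫⁻ ω, ENNReal.ofReal ((∑ i ∈ J, Y i ω) ^ 2) ∂μ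
      ≤ ∫⁻ ω, ENNReal.ofReal J.card * ∑ i ∈ J, ENNReal.ofReal (Y i ω ^ 2) ∂μ :=
        lintegral_mono fun ω => by
          rw [← ENNReal.ofReal_sum_of_nonneg fun i _ => sq_nonneg _,
            ← ENNReal.ofReal_mul J.card.cast_nonneg]
          exact ENNReal.ofReal_le_ofReal (sq_sum_le_card_mul_sum_sq)
    _ = ENNReal.ofReal J.card * ∑ i ∈ J, ∫⁻ ω, ENNReal.ofReal (Y i ω ^ 2) ∂μ := by
      rw [lintegral_const_mul' _ _ ENNReal.ofReal_ne_top,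
        lintegral_finsetSum _ fun i _ => ((hY i).pow_const 2).ennreal_ofReal]
    _ ≤ ENNReal.ofReal J.card * ∑ _i ∈ J, ENNReal.ofReal c := by
      gcongr with i hi; exact hc i hi
    _ = ENNReal.ofReal (J.card ^ 2 * c) := by
      rw [Finset.sum_const, nsmul_eq_mul, ← mul_assoc, ← ENNReal.ofReal_natCast,
        ← ENNReal.ofReal_mul J.card.cast_nonneg, ← ENNReal.ofReal_mul (by positivity), sq]

theorem lintegral_sq_sum_eq_of_map_eq_gaussianReal [IsProbabilityMeasure μ] {ι : Type*}
    {X : ι → Ω → ℝ} (I : Finset ι) {v : ℝ≥0} (hX : ∀ i ∈ I, Measurable (X i))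
    (hlaw : ∀ i ∈ I, μ.map (X i) = gaussianReal 0 v)
    (hind : Set.Pairwise I fun i j => X i ⟂ᵢ[μ] X j) :
    ∫⁻ ω, ENNReal.ofReal ((∑ i ∈ I, X i ω) ^ 2) ∂μ = ENNReal.ofReal (I.card * v) := by
  have hL2 : ∀ i ∈ I, MemLp (X i) 2 μ := fun i hi =>
    (memLp_map_measure_iff aestronglyMeasurable_id (hX i hi).aemeasurable).1
      (by rw [hlaw i hi]; exact memLp_id_gaussianReal' 2 (by norm_num))
  have hmean : ∀ i ∈ I, μ[X i] = 0 := fun i hi => by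
    have h := integral_map (hX i hi).aemeasurable (aestronglyMeasurable_id (μ := μ.map (X i)))
    simp only [hlaw i hi, id, integral_id_gaussianReal] at h
    exact h.symm
  have hvar : ∀ i ∈ I, Var[X i; μ] = v := fun i hi => by
    rw [← variance_id_gaussianReal (μ := 0) (v := v), ← hlaw i hi,
      variance_map aemeasurable_id (hX i hi).aemeasurable]
    rfl
  have hSL2 : MemLp (∑ i ∈ I, X i) 2 μ := memLp_finsetSum' I hL2
  have hSmean : μ[∑ i ∈ I, X i] = 0 := by
    simp_rw [Finset.sum_apply]
    rw [integral_finsetSum I fun i hi => (hL2 i hi).integrable one_le_two]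
    exact Finset.sum_eq_zero hmean
  have hSvar : Var[∑ i ∈ I, X i; μ] = I.card * v := by
    rw [IndepFun.variance_sum hL2 hind, Finset.sum_congr rfl hvar, Finset.sum_const,
      nsmul_eq_mul]
  rw [variance_of_integral_eq_zero hSL2.aemeasurable hSmean] at hSvar
  rw [← hSvar, ofReal_integral_eq_lintegral_ofReal hSL2.integrable_sq
    (ae_of_all _ fun _ => sq_nonneg _)]
  simp_rw [Finset.sum_apply]

end SecondMomentStrongLaw

section BrownianMotion

variable {Ω : Type*} [mΩ : MeasurableSpace Ω] {P : Measure Ω} {F : ℝ → MeasurableSpace Ω}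
  {B : ℝ → Ω → ℝ}

theorem IsBM.map_eq_gaussianReal (hB : IsBM P F B) {t : ℝ} (ht : 0 ≤ t) :
    P.map (B t) = gaussianReal 0 t.toNNReal := by
  simpa [hB.2.1] using hB.2.2.2.1 0 t le_rfl ht

theorem IsBM.measurable_uncurry (hB : IsBM P F B) (hF : ∀ t, F t ≤ mΩ) :
    Measurable (Function.uncurry B) :=
  measurable_uncurry_of_continuous_of_measurable hB.2.2.1 fun t => (hB.1 t).mono (hF t) le_rfl

section GaussianFamily

variable {μ : Measure Ω} [IsProbabilityMeasure μ] {W : ℕ → ℝ → Ω → ℝ}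

theorem lintegral_sq_pathSeminorm_sum_le (hWm : ∀ i, Measurable (Function.uncurry (W i)))
    (hWc : ∀ i ω, Continuous fun s => W i s ω)
    (hlaw : ∀ i s, 0 ≤ s → μ.map (W i s) = gaussianReal 0 s.toNNReal)
    (hind : ∀ s, Pairwise fun i j => W i s ⟂ᵢ[μ] W j s) {t : ℝ} (ht : 0 ≤ t)
    (I : Finset ℕ) :
    ∫⁻ ω, ENNReal.ofReal ((pathSeminorm t fun s => ∑ i ∈ I, W i s ω) ^ 2) ∂μ
      ≤ ENNReal.ofReal (2 * (1 + t ^ 2) * t * I.card) := by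
  refine (lintegral_sq_pathSeminorm_le (X := fun s ω => ∑ i ∈ I, W i s ω)
    (Finset.measurable_sum I fun i _ => hWm i)
    (fun ω => continuous_finsetSum I fun i _ => hWc i ω)
    ht (m := I.card * t) (by positivity) fun s hs => ?_).trans_eq (by congr 1; ring)
  rw [lintegral_sq_sum_eq_of_map_eq_gaussianReal I (fun i _ => (hWm i).of_uncurry_left)
    (fun i _ => hlaw i s hs.1) ((hind s).set_pairwise _), Real.coe_toNNReal _ hs.1]
  exact ENNReal.ofReal_le_ofReal (by gcongr; exact hs.2)

theorem ae_tendsto_pathSeminorm_sum_div (hWm : ∀ i, Measurable (Function.uncurry (W i)))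
    (hWc : ∀ i ω, Continuous fun s => W i s ω)
    (hlaw : ∀ i s, 0 ≤ s → μ.map (W i s) = gaussianReal 0 s.toNNReal)
    (hind : ∀ s, Pairwise fun i j => W i s ⟂ᵢ[μ] W j s) {t : ℝ} (ht : 0 ≤ t) :
    ∀ᵐ ω ∂μ, Tendsto (fun N : ℕ =>
      (pathSeminorm t fun s => ∑ i ∈ Finset.Icc 1 N, W i s ω) / N) atTop (𝓝 0) := by
  set c := 2 * (1 + t ^ 2) * t
  have hc : 0 ≤ c := by positivity
  have hsum := lintegral_sq_pathSeminorm_sum_le hWm hWc hlaw hind ht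
  refine ae_tendsto_div_of_lintegral_sq_le (C := 9 * c)
    (q := fun N ω => pathSeminorm t fun s => ∑ i ∈ Finset.Icc 1 N, W i s ω)
    (g := fun k ω => ∑ i ∈ Finset.Ioc (k ^ 2) ((k + 1) ^ 2), pathSeminorm t fun s => W i s ω)
    (by positivity) (fun N ω => pathSeminorm_nonneg _ _)
    (fun N => (measurable_pathSeminorm (Finset.measurable_sum _ fun i _ => hWm i) t).aemeasurable)
    (fun k => (Finset.measurable_sum _ fun i _ => measurable_pathSeminorm (hWm i) t).aemeasurable)
    (fun ω k N hk hN => pathSeminorm_sum_Icc_le (hWc · ω) t hk hN.le)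
    (fun N => (hsum _).trans (ENNReal.ofReal_le_ofReal ?_)) fun k hk => ?_
  · rw [Nat.card_Icc, Nat.add_sub_cancel]
    nlinarith [mul_nonneg hc N.cast_nonneg]
  · have hcard : (Finset.Ioc (k ^ 2) ((k + 1) ^ 2)).card = 2 * k + 1 := by
      rw [Nat.card_Ioc]; ring_nf; omega
    refine (lintegral_sq_sum_le _ (c := c) (fun i => measurable_pathSeminorm (hWm i) t)
      fun i _ => by simpa using hsum {i}).trans (ENNReal.ofReal_le_ofReal ?_)
    have hk' : (1 : ℝ) ≤ k := by exact_mod_cast hk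
    have h3 : (2 * (k : ℝ) + 1) ^ 2 ≤ 9 * (k : ℝ) ^ 2 := by nlinarith
    rw [hcard]
    push_cast
    nlinarith [mul_le_mul_of_nonneg_right h3 hc]

end GaussianFamily

theorem ae_tendsto_pathSeminorm_sum_div_of_isBM [IsProbabilityMeasure P]
    {W : ℕ → ℝ → Ω → ℝ} (hBM : ∀ i, IsBM P F (W i)) (hF : ∀ t, F t ≤ mΩ)
    (hindep : iIndepFun (fun i ω t => W i t ω) P) {t : ℝ} (ht : 0 ≤ t) :
    ∀ᵐ ω ∂P, Tendsto (fun N : ℕ =>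
      (pathSeminorm t fun s => ∑ i ∈ Finset.Icc 1 N, W i s ω) / N) atTop (𝓝 0) :=
  ae_tendsto_pathSeminorm_sum_div (fun i => (hBM i).measurable_uncurry hF)
    (fun i => (hBM i).2.2.1) (fun i _ hs => (hBM i).map_eq_gaussianReal hs)
    (fun s _ _ hij => (hindep.indepFun hij).comp (measurable_pi_apply s) (measurable_pi_apply s))
    ht

end BrownianMotion

theorem tendsto_of_abs_sub_add_abs_sub_tendsto_zero {α : Type*} {l : Filter α}
    {x y : α → ℝ} {x₀ y₀ : ℝ}
    (h : Tendsto (fun n => |x n - x₀| + |y n - y₀|) l (𝓝 0)) :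
    Tendsto x l (𝓝 x₀) ∧ Tendsto y l (𝓝 y₀) := by
  refine ⟨tendsto_iff_dist_tendsto_zero.2 ?_, tendsto_iff_dist_tendsto_zero.2 ?_⟩ <;>
    simp only [Real.dist_eq]
  · exact squeeze_zero (fun _ => abs_nonneg _) (fun _ => le_add_of_nonneg_right (abs_nonneg _)) h
  · exact squeeze_zero (fun _ => abs_nonneg _) (fun _ => le_add_of_nonneg_left (abs_nonneg _)) h

theorem linear_example_convergence_general
    {Ω : Type*} [mΩ : MeasurableSpace Ω] (P : Measure Ω) [IsProbabilityMeasure P]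
    (T : ℝ) (a b c D0 D : ℝ) (hD : 0 ≤ D) (x00 x0 : ℝ)
    (F : ℝ → MeasurableSpace Ω)
    (hFle : ∀ t, F t ≤ mΩ)
    (W : ℕ → ℝ → Ω → ℝ) (hBM : ∀ i, IsBM P F (W i))
    (hindep : iIndepFun
      (fun i ω t => W i t ω) P)
    -- the common linear feedback (coming from the common Riccati solution)
    (S00 S01 : ℝ → ℝ) (hS00 : Continuous S00) (hS01 : Continuous S01)
    (X0N XN : ℕ → ℝ → Ω → ℝ) (X0 Xb : ℝ → Ω → ℝ)
    (hcontN : ∀ N ω, Continuous (fun t => X0N N t ω) ∧ Continuous (fun t => XN N t ω))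
    (hcont : ∀ ω, Continuous (fun t => X0 t ω) ∧ Continuous (fun t => Xb t ω))
    -- finite-player optimally controlled system
    (hfin : ∀ N : ℕ, 1 ≤ N → ∀ᵐ ω ∂P, ∀ t ∈ Set.Icc (0:ℝ) T,
      X0N N t ω = x00 + (∫ s in Set.Ioc 0 t,
          (a * XN N s ω - b ^ 2 / 2 * (S00 s * X0N N s ω + S01 s * XN N s ω)))
        + D0 * W 0 t ω ∧
      XN N t ω = x0 + (∫ s in Set.Ioc 0 t, c * X0N N s ω)
        + (D / N) * ∑ i ∈ Finset.Icc 1 N, W i t ω)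
    -- limiting system with the same feedback, driven by `W⁰` only
    (hlim : ∀ᵐ ω ∂P, ∀ t ∈ Set.Icc (0:ℝ) T,
      X0 t ω = x00 + (∫ s in Set.Ioc 0 t,
          (a * Xb s ω - b ^ 2 / 2 * (S00 s * X0 s ω + S01 s * Xb s ω)))
        + D0 * W 0 t ω ∧
      Xb t ω = x0 + (∫ s in Set.Ioc 0 t, c * X0 s ω)) :
    (∃ K : ℝ, ∀ N : ℕ, 1 ≤ N → ∀ᵐ ω ∂P, ∀ t ∈ Set.Icc (0:ℝ) T,
      |X0N N t ω - X0 t ω| + |XN N t ω - Xb t ω| ≤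
        Real.exp (K * t) * (D / N) *
          ⨆ s : Set.Icc (0:ℝ) t, |∑ i ∈ Finset.Icc 1 N, W i s.1 ω|) ∧
    ∀ t ∈ Set.Icc (0:ℝ) T, ∀ᵐ ω ∂P,
      Tendsto (fun N => X0N N t ω) atTop (𝓝 (X0 t ω)) ∧
      Tendsto (fun N => XN N t ω) atTop (𝓝 (Xb t ω)) := by
  obtain ⟨K, hK0, hK⟩ := exists_linear_system_bound (a := a) (b := b) (c := c) hS00 hS01
  have hWc : ∀ N ω, Continuous fun s => ∑ i ∈ Finset.Icc 1 N, W i s ω :=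
    fun N ω => continuous_finsetSum _ fun i _ => (hBM i).2.2.1 ω
  have hZc : ∀ N ω, Continuous fun s => |X0N N s ω - X0 s ω| + |XN N s ω - Xb s ω| :=
    fun N ω => ((hcontN N ω).1.sub (hcont ω).1).abs.add ((hcontN N ω).2.sub (hcont ω).2).abs
  have hcore : ∀ N : ℕ, ∀ᵐ ω ∂P, 1 ≤ N → ∀ u ∈ Set.Icc (0:ℝ) T,
      |X0N N u ω - X0 u ω| + |XN N u ω - Xb u ω|
        ≤ D / N * |∑ i ∈ Finset.Icc 1 N, W i u ω|
          + K * ∫ s in Set.Ioc 0 u, (|X0N N s ω - X0 s ω| + |XN N s ω - Xb s ω|) := by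
    intro N
    rcases Nat.lt_or_ge N 1 with hN | hN
    · exact ae_of_all _ fun _ h => absurd h (by omega)
    filter_upwards [hfin N hN, hlim] with ω hNω hω _ u hu
    rw [← abs_of_nonneg (div_nonneg hD N.cast_nonneg), ← abs_mul]
    exact abs_sub_add_abs_sub_le_of_linear_system hS00 hS01 (hcontN N ω).1 (hcontN N ω).2
      (hcont ω).1 (hcont ω).2 hK hNω hω u hu
  refine ⟨⟨2 * K, fun N hN => ?_⟩, fun t ht => ?_⟩
  · filter_upwards [hcore N] with ω hω t ht
    exact le_exp_mul_iSup_of_le_add_mul_integral (div_nonneg hD N.cast_nonneg) hK0 ht.1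
      (hZc N ω) (hWc N ω) fun u hu => hω hN u ⟨hu.1, hu.2.trans ht.2⟩
  filter_upwards [ae_tendsto_pathSeminorm_sum_div_of_isBM hBM hFle hindep ht.1,
    ae_all_iff.2 hcore] with ω hS hω
  refine tendsto_of_abs_sub_add_abs_sub_tendsto_zero (squeeze_zero'
    (Eventually.of_forall fun N => by positivity) ?_
    (by simpa using hS.const_mul ((1 + K * Real.exp (K * t)) * D)))
  filter_upwards [eventually_ge_atTop 1] with N hN
  refine (le_mul_pathSeminorm_of_le_add_mul_integral (div_nonneg hD N.cast_nonneg) hK0 ht.1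
    (hZc N ω) (hWc N ω) fun u hu => hω N hN u ⟨hu.1, hu.2.trans ht.2⟩).trans_eq ?_
  ring

/-- pathwise Gronwall bound and almost sure convergence for the linear
example: the `(N+1)`-player equilibrium state processes converge to the limiting ones,
with the explicit pathwise bound `e^{Kt}(D/N) max_{0≤s≤t}|∑_{i=1}^N W^i_s|`. -/
theorem linear_example_convergence
    {Ω : Type*} [mΩ : MeasurableSpace Ω] (P : Measure Ω) [IsProbabilityMeasure P]
    (T : ℝ) (hT : 0 < T) (a b c D0 D : ℝ) (hD : 0 ≤ D) (x00 x0 : ℝ)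
    (F : ℝ → MeasurableSpace Ω)
    (hFmono : ∀ s t : ℝ, s ≤ t → F s ≤ F t) (hFle : ∀ t, F t ≤ mΩ)
    (W : ℕ → ℝ → Ω → ℝ) (hBM : ∀ i, IsBM P F (W i))
    (hindep : iIndepFun
      (fun i ω t => W i t ω) P)
    -- the common linear feedback (coming from the common Riccati solution)
    (S00 S01 : ℝ → ℝ) (hS00 : Continuous S00) (hS01 : Continuous S01)
    (X0N XN : ℕ → ℝ → Ω → ℝ) (X0 Xb : ℝ → Ω → ℝ)
    (hcontN : ∀ N ω, Continuous (fun t => X0N N t ω) ∧ Continuous (fun t => XN N t ω))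
    (hcont : ∀ ω, Continuous (fun t => X0 t ω) ∧ Continuous (fun t => Xb t ω))
    -- finite-player optimally controlled system
    (hfin : ∀ N : ℕ, 1 ≤ N → ∀ᵐ ω ∂P, ∀ t ∈ Set.Icc (0:ℝ) T,
      X0N N t ω = x00 + (∫ s in Set.Ioc 0 t,
          (a * XN N s ω - b ^ 2 / 2 * (S00 s * X0N N s ω + S01 s * XN N s ω)))
        + D0 * W 0 t ω ∧
      XN N t ω = x0 + (∫ s in Set.Ioc 0 t, c * X0N N s ω)
        + (D / N) * ∑ i ∈ Finset.Icc 1 N, W i t ω)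
    -- limiting system with the same feedback, driven by `W⁰` only
    (hlim : ∀ᵐ ω ∂P, ∀ t ∈ Set.Icc (0:ℝ) T,
      X0 t ω = x00 + (∫ s in Set.Ioc 0 t,
          (a * Xb s ω - b ^ 2 / 2 * (S00 s * X0 s ω + S01 s * Xb s ω)))
        + D0 * W 0 t ω ∧
      Xb t ω = x0 + (∫ s in Set.Ioc 0 t, c * X0 s ω)) :
    (∃ K : ℝ, ∀ N : ℕ, 1 ≤ N → ∀ᵐ ω ∂P, ∀ t ∈ Set.Icc (0:ℝ) T,
      |X0N N t ω - X0 t ω| + |XN N t ω - Xb t ω| ≤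
        Real.exp (K * t) * (D / N) *
          ⨆ s : Set.Icc (0:ℝ) t, |∑ i ∈ Finset.Icc 1 N, W i s.1 ω|) ∧
    ∀ t ∈ Set.Icc (0:ℝ) T, ∀ᵐ ω ∂P,
      Tendsto (fun N => X0N N t ω) atTop (𝓝 (X0 t ω)) ∧
      Tendsto (fun N => XN N t ω) atTop (𝓝 (Xb t ω)) :=
  linear_example_convergence_general (mΩ := mΩ) P T a b c D0 D hD x00 x0 F hFle W hBM hindep S00 S01
    hS00 hS01 X0N XN X0 Xb hcontN hcont hfin hlim
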